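/- arXiv:0910.0928 — 6 statements merged into one kernel-verified Lean document; each statement's English description precedes it below -/
import Mathlib

section
/- Let f : (Fin n → ℝ) → (Fin m → ℝ) be a vector field each of whose component functions fⱼ is multiaffine (the evaluation of an n-variable real polynomial with degree at most 1 in each variable). Let a, b : Fin n → ℝ satisfy aᵢ ≤ bᵢ for every i. Then the image of the box [a,b] under f is contained in the convex hull of the finite set {f(v) | v a vertex of [a,b]}, i.e., f([a,b]) ⊆ convexHull {f(v) | ∀ i, vᵢ = aᵢ ∨ vᵢ = bᵢ}. -/
/-- A function `f : (Fin n → ℝ) → ℝ` is multiaffine if it is the evaluation of an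
`n`-variable real polynomial whose degree in each variable is at most `1`. -/
def MultiAffine {n : ℕ} (f : (Fin n → ℝ) → ℝ) : Prop :=
  ∃ p : MvPolynomial (Fin n) ℝ, (∀ i, p.degreeOf i ≤ 1) ∧
    ∀ x, f x = MvPolynomial.eval x p

/-- Auxiliary: sum over all Boolean vectors of a product factorizes. -/
lemma sum_prod_bool_aux {n : ℕ} (g : Fin n → Bool → ℝ) :
    ∑ c : Fin n → Bool, ∏ i, g i (c i) = ∏ i, (g i true + g i false) := by
  have h := Finset.prod_univ_sum (fun _ : Fin n => (Finset.univ : Finset Bool)) g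
  rw [Fintype.piFinset_univ] at h
  simp only [Fintype.sum_bool] at h
  exact h.symm

/-- The image of a box under a multiaffine vector field is contained in the convex
hull of the images of the box's vertices. -/
theorem multiaffine_image_box_subset_convexHull {n m : ℕ}
    (f : (Fin n → ℝ) → (Fin m → ℝ)) (hf : ∀ j, MultiAffine (fun x => f x j))
    (a b : Fin n → ℝ) (hab : ∀ i, a i ≤ b i) :
    f '' {x : Fin n → ℝ | ∀ i, a i ≤ x i ∧ x i ≤ b i} ⊆
      convexHull ℝ (f '' {v : Fin n → ℝ | ∀ i, v i = a i ∨ v i = b i}) := by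
  classical
  rintro _ ⟨x, hx, rfl⟩
  -- barycentric coordinates along each axis
  set t : Fin n → ℝ := fun i => if a i = b i then 0 else (x i - a i) / (b i - a i) with ht
  have ht0 : ∀ i, 0 ≤ t i := by
    intro i
    simp only [ht]
    split
    · exact le_refl 0
    · rename_i h
      have hlt : a i < b i := lt_of_le_of_ne (hab i) h
      exact div_nonneg (by linarith [(hx i).1]) (by linarith)
  have ht1 : ∀ i, t i ≤ 1 := by
    intro i
    simp only [ht]
    split
    · norm_num
    · rename_i h
      have hlt : a i < b i := lt_of_le_of_ne (hab i) h
      rw [div_le_one (by linarith)]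
      linarith [(hx i).2]
  have hxt : ∀ i, x i = (1 - t i) * a i + t i * b i := by
    intro i
    simp only [ht]
    split
    · rename_i h
      have h1 := (hx i).1; have h2 := (hx i).2
      rw [← h] at h2
      have : x i = a i := le_antisymm h2 h1
      rw [this, h]; ring
    · rename_i h
      have hlt : a i < b i := lt_of_le_of_ne (hab i) h
      have hne : b i - a i ≠ 0 := by linarith
      have h2 : (x i - a i) / (b i - a i) * (b i - a i) = x i - a i :=
        div_mul_cancel₀ _ hne
      linear_combination -h2
  set vert : (Fin n → Bool) → (Fin n → ℝ) := fun c i => if c i then b i else a i with hvert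
  set w : (Fin n → Bool) → ℝ := fun c => ∏ i, (if c i then t i else 1 - t i) with hw
  have hw0 : ∀ c, 0 ≤ w c := fun c =>
    Finset.prod_nonneg fun i _ => by
      by_cases h : c i <;> simp [h, ht0 i] <;> linarith [ht1 i]
  have hwsum : ∑ c : Fin n → Bool, w c = 1 := by
    have h := sum_prod_bool_aux (fun i bb => if bb then t i else 1 - t i)
    calc ∑ c : Fin n → Bool, w c
        = ∑ c : Fin n → Bool, ∏ i, ((fun i bb => if bb then t i else 1 - t i) i (c i)) := rfl
      _ = ∏ i, ((fun i bb => if bb then t i else 1 - t i) i true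
            + (fun i bb => if bb then t i else 1 - t i) i false) := h
      _ = 1 := by simp
  -- the interpolation identity for each multiaffine component
  have key : ∀ j, f x j = ∑ c : Fin n → Bool, w c * f (vert c) j := by
    intro j
    obtain ⟨p, hdeg, hp⟩ := hf j
    have hmono : ∀ d ∈ p.support, ∀ i : Fin n, d i ≤ 1 := fun d hd i =>
      le_trans (MvPolynomial.monomial_le_degreeOf i hd) (hdeg i)
    have hfactor : ∀ d ∈ p.support, ∀ i : Fin n,
        t i * (b i) ^ d i + (1 - t i) * (a i) ^ d i = x i ^ d i := by
      intro d hd i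
      rcases Nat.le_one_iff_eq_zero_or_eq_one.mp (hmono d hd i) with h | h <;> rw [h]
      · simp
      · simp only [pow_one]
        rw [hxt i]; ring
    have hmon : ∀ d ∈ p.support, (∏ i, x i ^ d i)
        = ∑ c : Fin n → Bool, ∏ i, ((if c i then t i else 1 - t i) * (vert c i) ^ d i) := by
      intro d hd
      have h := sum_prod_bool_aux
        (fun i bb => (if bb then t i else 1 - t i) * (if bb then b i else a i) ^ d i)
      calc (∏ i, x i ^ d i)
          = ∏ i, ((fun i bb => (if bb then t i else 1 - t i) * (if bb then b i else a i) ^ d i) i true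
              + (fun i bb => (if bb then t i else 1 - t i) * (if bb then b i else a i) ^ d i) i false) := by
            refine Finset.prod_congr rfl fun i _ => ?_
            simp only [if_true, if_false, Bool.cond_true]
            exact (hfactor d hd i).symm
        _ = ∑ c : Fin n → Bool,
              ∏ i, ((fun i bb => (if bb then t i else 1 - t i) * (if bb then b i else a i) ^ d i) i (c i)) := h.symm
        _ = ∑ c : Fin n → Bool, ∏ i, ((if c i then t i else 1 - t i) * (vert c i) ^ d i) := rfl
    calc f x j = MvPolynomial.eval x p := hp x
      _ = ∑ d ∈ p.support, p.coeff d * ∏ i, x i ^ d i := MvPolynomial.eval_eq' x p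
      _ = ∑ d ∈ p.support, p.coeff d *
            ∑ c : Fin n → Bool, ∏ i, ((if c i then t i else 1 - t i) * (vert c i) ^ d i) := by
          refine Finset.sum_congr rfl fun d hd => ?_
          rw [hmon d hd]
      _ = ∑ d ∈ p.support, ∑ c : Fin n → Bool,
            p.coeff d * (w c * ∏ i, (vert c i) ^ d i) := by
          refine Finset.sum_congr rfl fun d hd => ?_
          rw [Finset.mul_sum]
          refine Finset.sum_congr rfl fun c _ => ?_
          rw [hw, Finset.prod_mul_distrib]
      _ = ∑ c : Fin n → Bool, w c * ∑ d ∈ p.support, p.coeff d * ∏ i, (vert c i) ^ d i := by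
          rw [Finset.sum_comm]
          refine Finset.sum_congr rfl fun c _ => ?_
          rw [Finset.mul_sum]
          refine Finset.sum_congr rfl fun d _ => ?_
          ring
      _ = ∑ c : Fin n → Bool, w c * f (vert c) j := by
          refine Finset.sum_congr rfl fun c _ => ?_
          rw [← MvPolynomial.eval_eq', ← hp]
  have hfx : f x = ∑ c : Fin n → Bool, w c • f (vert c) := by
    funext j
    rw [Finset.sum_apply]
    simpa using key j
  rw [hfx]
  refine (convex_convexHull ℝ _).sum_mem (fun c _ => hw0 c) hwsum fun c _ => ?_
  exact subset_convexHull ℝ _ ⟨vert c, fun i => by by_cases h : c i <;> simp [hvert, h], rfl⟩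
end

section
/- Let f : (Fin n → ℝ) → ℝ be multiaffine (the evaluation of an n-variable real polynomial with degree at most 1 in each variable), and let a, b : Fin n → ℝ satisfy aᵢ ≤ bᵢ for every i. Then f attains its maximum over the box [a,b] at some vertex of [a,b]: there exists a vertex v (vᵢ ∈ {aᵢ, bᵢ} for all i) such that f(x) ≤ f(v) for every x in the box. An analogous statement holds for the minimum. -/
open MvPolynomial Finset in
/-- A multiaffine function is affine in each coordinate. -/
lemma multiaffine_coord_affine {n : ℕ} (f : (Fin n → ℝ) → ℝ) (hf : MultiAffine f)
    (x : Fin n → ℝ) (i : Fin n) :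
    ∃ A B : ℝ, ∀ t : ℝ, f (Function.update x i t) = A + B * t := by
  obtain ⟨p, hdeg, hev⟩ := hf
  classical
  refine ⟨∑ m ∈ p.support.filter (fun m => m i = 0),
      coeff m p * ∏ j ∈ univ.erase i, x j ^ m j,
    ∑ m ∈ p.support.filter (fun m => m i ≠ 0),
      coeff m p * ∏ j ∈ univ.erase i, x j ^ m j, fun t => ?_⟩
  rw [hev, eval_eq']
  have key : ∀ m ∈ p.support, coeff m p * ∏ j, (Function.update x i t) j ^ m j
      = (coeff m p * ∏ j ∈ univ.erase i, x j ^ m j) * t ^ m i := by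
    intro m hm
    rw [← Finset.mul_prod_erase univ _ (mem_univ i)]
    have : ∀ j ∈ univ.erase i, (Function.update x i t) j ^ m j = x j ^ m j := by
      intro j hj
      rw [Function.update_of_ne (Finset.mem_erase.mp hj).1]
    rw [Finset.prod_congr rfl this, Function.update_self]
    ring
  rw [Finset.sum_congr rfl key]
  rw [← Finset.sum_filter_add_sum_filter_not p.support (fun m => m i = 0)]
  congr 1
  · exact Finset.sum_congr rfl fun m hm => by
      rw [(Finset.mem_filter.mp hm).2, pow_zero, mul_one]
  · rw [Finset.sum_mul]
    refine Finset.sum_congr rfl fun m hm => ?_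
    obtain ⟨hm, hmi⟩ := Finset.mem_filter.mp hm
    have h1 : m i = 1 := le_antisymm ((monomial_le_degreeOf i hm).trans (hdeg i))
      (Nat.one_le_iff_ne_zero.mpr hmi)
    rw [h1, pow_one]

/-- Rounding lemma: any point of the box can be moved to a point whose coordinates
in `s` are at endpoints, without decreasing `f`. -/
lemma round_up {n : ℕ} (f : (Fin n → ℝ) → ℝ) (hf : MultiAffine f)
    (a b : Fin n → ℝ) (s : Finset (Fin n)) :
    ∀ x : Fin n → ℝ, (∀ i, a i ≤ x i ∧ x i ≤ b i) →
      ∃ y : Fin n → ℝ, (∀ i, a i ≤ y i ∧ y i ≤ b i) ∧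
        (∀ i ∈ s, y i = a i ∨ y i = b i) ∧ (∀ i ∉ s, y i = x i) ∧ f x ≤ f y := by
  classical
  induction s using Finset.cons_induction with
  | empty => exact fun x hx => ⟨x, hx, by simp, fun _ _ => rfl, le_refl _⟩
  | cons i s hi ih =>
    intro x hx
    obtain ⟨A, B, hAB⟩ := multiaffine_coord_affine f hf x i
    obtain ⟨t, ht, hft⟩ : ∃ t, (t = a i ∨ t = b i) ∧ f x ≤ f (Function.update x i t) := by
      rcases le_or_gt 0 B with hB | hB
      · refine ⟨b i, Or.inr rfl, ?_⟩
        have hx' : Function.update x i (x i) = x := Function.update_eq_self i x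
        have h1 : f x = A + B * x i := by conv_lhs => rw [← hx', hAB]
        rw [h1, hAB]
        nlinarith [(hx i).2]
      · refine ⟨a i, Or.inl rfl, ?_⟩
        have hx' : Function.update x i (x i) = x := Function.update_eq_self i x
        have h1 : f x = A + B * x i := by conv_lhs => rw [← hx', hAB]
        rw [h1, hAB]
        nlinarith [(hx i).1]
    set x' := Function.update x i t with hx'def
    have hx'box : ∀ j, a j ≤ x' j ∧ x' j ≤ b j := by
      intro j
      by_cases hji : j = i
      · subst hji
        simp only [hx'def, Function.update_self]
        rcases ht with h | h <;> subst h
        · exact ⟨le_refl _, (hx j).1.trans (hx j).2⟩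
        · exact ⟨(hx j).1.trans (hx j).2, le_refl _⟩
      · simpa [hx'def, Function.update_of_ne hji] using hx j
    obtain ⟨y, hybox, hys, hyout, hfy⟩ := ih x' hx'box
    refine ⟨y, hybox, ?_, ?_, hft.trans hfy⟩
    · intro j hj
      rcases Finset.mem_cons.mp hj with h | h
      · subst h
        have : y j = x' j := hyout j (by simpa using hi)
        rw [this, hx'def, Function.update_self]; exact ht
      · exact hys j h
    · intro j hj
      rw [Finset.mem_cons, not_or] at hj
      rw [hyout j hj.2, hx'def, Function.update_of_ne hj.1]

lemma multiaffine_neg {n : ℕ} (f : (Fin n → ℝ) → ℝ) (hf : MultiAffine f) :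
    MultiAffine (fun x => -(f x)) := by
  obtain ⟨p, hdeg, hev⟩ := hf
  exact ⟨-p, fun i => le_trans (le_of_eq (MvPolynomial.degreeOf_neg _ _)) (hdeg i),
    fun x => show -(f x) = _ by rw [hev, map_neg]⟩

/-- A multiaffine function attains its maximum over a box at some vertex of the box,
and likewise attains its minimum at some vertex. -/
theorem multiaffine_max_min_at_vertex {n : ℕ} (f : (Fin n → ℝ) → ℝ)
    (hf : MultiAffine f) (a b : Fin n → ℝ) (hab : ∀ i, a i ≤ b i) :
    (∃ v : Fin n → ℝ, (∀ i, v i = a i ∨ v i = b i) ∧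
      ∀ x : Fin n → ℝ, (∀ i, a i ≤ x i ∧ x i ≤ b i) → f x ≤ f v) ∧
    (∃ w : Fin n → ℝ, (∀ i, w i = a i ∨ w i = b i) ∧
      ∀ x : Fin n → ℝ, (∀ i, a i ≤ x i ∧ x i ≤ b i) → f w ≤ f x) := by
  have main : ∀ g : (Fin n → ℝ) → ℝ, MultiAffine g →
      ∃ v : Fin n → ℝ, (∀ i, v i = a i ∨ v i = b i) ∧
        ∀ x : Fin n → ℝ, (∀ i, a i ≤ x i ∧ x i ≤ b i) → g x ≤ g v := by
    intro g hg
    obtain ⟨p, hdeg, hev⟩ := hg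
    have hcont : Continuous g := by
      have : g = fun x => MvPolynomial.eval x p := funext hev
      rw [this]; exact MvPolynomial.continuous_eval p
    have hcpt : IsCompact (Set.Icc a b) := isCompact_Icc
    have hne : (Set.Icc a b).Nonempty := ⟨a, le_refl _, fun i => hab i⟩
    obtain ⟨x₀, hx₀mem, hx₀max⟩ := hcpt.exists_isMaxOn hne hcont.continuousOn
    have hx₀box : ∀ i, a i ≤ x₀ i ∧ x₀ i ≤ b i :=
      fun i => ⟨hx₀mem.1 i, hx₀mem.2 i⟩
    obtain ⟨v, hvbox, hvs, _, hfv⟩ := round_up g ⟨p, hdeg, hev⟩ a b Finset.univ x₀ hx₀box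
    refine ⟨v, fun i => hvs i (Finset.mem_univ i), fun x hx => ?_⟩
    exact le_trans (hx₀max ⟨fun i => (hx i).1, fun i => (hx i).2⟩) hfv
  refine ⟨main f hf, ?_⟩
  obtain ⟨w, hw, hwle⟩ := main (fun x => -(f x)) (multiaffine_neg f hf)
  exact ⟨w, hw, fun x hx => by linarith [hwle x hx]⟩
end

section
/- Let f : (Fin n → ℝ) → (Fin n → ℝ) be a vector field each of whose components is multiaffine, let a, b : Fin n → ℝ satisfy aᵢ ≤ bᵢ for every i, fix an index i₀, and let F = {x ∈ [a,b] | x_{i₀} = b_{i₀}} be the upper face of the box in direction i₀. Suppose f_{i₀}(v) < 0 for every vertex v of [a,b] lying in F. Then for every differentiable curve x : ℝ → (Fin n → ℝ) satisfying x'(t) = f(x(t)) for all t, and every time t₀ with x(t₀) ∈ F, there exists ε > 0 such that x_{i₀}(t) < b_{i₀} for all t ∈ (t₀, t₀ + ε]; i.e., the trajectory cannot exit the box through the face F in the direction of increasing coordinate i₀. -/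
open MvPolynomial Function Finset in
/-- A polynomial of degree ≤ 1 in variable `j` is affine in that variable. -/
lemma eval_update_affine {n : ℕ} (p : MvPolynomial (Fin n) ℝ) (j : Fin n)
    (h : p.degreeOf j ≤ 1) (c : Fin n → ℝ) :
    ∃ A B : ℝ, ∀ t, MvPolynomial.eval (Function.update c j t) p = A + B * t := by
  refine ⟨∑ m ∈ p.support, (if m j = 0 then coeff m p * ∏ i ∈ univ.erase j, c i ^ m i else 0),
         ∑ m ∈ p.support, (if m j = 1 then coeff m p * ∏ i ∈ univ.erase j, c i ^ m i else 0),
         fun t => ?_⟩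
  rw [eval_eq']
  rw [Finset.sum_mul, ← Finset.sum_add_distrib]
  refine Finset.sum_congr rfl fun m hm => ?_
  have hmj : m j ≤ 1 := by
    rw [degreeOf_eq_sup] at h
    exact le_trans (Finset.le_sup (f := fun m => m j) hm) h
  have hprod : ∏ i, Function.update c j t i ^ m i
      = t ^ m j * ∏ i ∈ univ.erase j, c i ^ m i := by
    rw [← Finset.mul_prod_erase univ _ (Finset.mem_univ j)]
    rw [Function.update_self]
    congr 1
    refine Finset.prod_congr rfl fun i hi => ?_
    rw [Function.update_of_ne (Finset.mem_erase.mp hi).1]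
  rw [hprod]
  interval_cases h : m j <;> simp <;> ring

open MvPolynomial in
/-- A polynomial of degree ≤ 1 in each variable that is negative at all vertices of a
box is negative on the whole box. -/
lemma neg_on_box {n : ℕ} (p : MvPolynomial (Fin n) ℝ) (hdeg : ∀ i, p.degreeOf i ≤ 1)
    (l u : Fin n → ℝ) (hlu : ∀ i, l i ≤ u i)
    (hneg : ∀ v : Fin n → ℝ, (∀ i, v i = l i ∨ v i = u i) → MvPolynomial.eval v p < 0) :
    ∀ c : Fin n → ℝ, (∀ i, l i ≤ c i ∧ c i ≤ u i) → MvPolynomial.eval c p < 0 := by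
  suffices H : ∀ s : Finset (Fin n), ∀ c : Fin n → ℝ,
      (∀ i, l i ≤ c i ∧ c i ≤ u i) → (∀ i ∉ s, c i = l i ∨ c i = u i) →
      MvPolynomial.eval c p < 0 by
    intro c hc
    exact H Finset.univ c hc (fun i hi => absurd (Finset.mem_univ i) hi)
  intro s
  induction s using Finset.induction_on with
  | empty =>
    intro c hc hv
    exact hneg c (fun i => hv i (Finset.notMem_empty i))
  | @insert j s hj ih =>
    intro c hc hv
    obtain ⟨A, B, hAB⟩ := eval_update_affine p j (hdeg j) c
    have hlj : MvPolynomial.eval (Function.update c j (l j)) p < 0 := by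
      apply ih
      · intro i
        rcases eq_or_ne i j with rfl | hij
        · simp [hlu i]
        · simp [Function.update_of_ne hij, hc i]
      · intro i his
        rcases eq_or_ne i j with rfl | hij
        · simp
        · rw [Function.update_of_ne hij]
          exact hv i (by simp [hij, his])
    have huj : MvPolynomial.eval (Function.update c j (u j)) p < 0 := by
      apply ih
      · intro i
        rcases eq_or_ne i j with rfl | hij
        · simp [hlu i]
        · simp [Function.update_of_ne hij, hc i]
      · intro i his
        rcases eq_or_ne i j with rfl | hij
        · simp
        · rw [Function.update_of_ne hij]
          exact hv i (by simp [hij, his])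
    rw [hAB] at hlj huj
    have hc' : MvPolynomial.eval c p = A + B * c j := by
      have := hAB (c j)
      rwa [Function.update_eq_self] at this
    rw [hc']
    rcases le_or_gt 0 B with hB | hB
    · nlinarith [(hc j).2]
    · nlinarith [(hc j).1]

/-- Soundness of the exit-face computation: if component `i₀` of a multiaffine vector
field is negative at all vertices of the upper face of the box in direction `i₀`, then
no trajectory of the field can exit the box through that face in the increasing-`i₀`
direction. -/
theorem no_exit_through_face_of_neg_on_vertices {n : ℕ}
    (f : (Fin n → ℝ) → (Fin n → ℝ)) (hf : ∀ j, MultiAffine (fun x => f x j))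
    (a b : Fin n → ℝ) (hab : ∀ i, a i ≤ b i) (i₀ : Fin n)
    (hneg : ∀ v : Fin n → ℝ, (∀ i, v i = a i ∨ v i = b i) → v i₀ = b i₀ →
      f v i₀ < 0)
    (x : ℝ → (Fin n → ℝ)) (hx : ∀ t, HasDerivAt x (f (x t)) t)
    (t₀ : ℝ) (hmem : (∀ i, a i ≤ x t₀ i ∧ x t₀ i ≤ b i) ∧ x t₀ i₀ = b i₀) :
    ∃ ε > 0, ∀ t ∈ Set.Ioc t₀ (t₀ + ε), x t i₀ < b i₀ := by
  obtain ⟨p, hpdeg, hpeval⟩ := hf i₀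
  -- the value of f i₀ at the point x t₀ is negative
  set l : Fin n → ℝ := fun i => if i = i₀ then b i₀ else a i with hl
  have hd : f (x t₀) i₀ < 0 := by
    have h0 : f (x t₀) i₀ = MvPolynomial.eval (x t₀) p := hpeval (x t₀)
    rw [h0]
    apply neg_on_box p hpdeg l b
    · intro i
      by_cases hi : i = i₀ <;> simp [hl, hi, hab i]
    · intro v hv
      have hv0 : f v i₀ = MvPolynomial.eval v p := hpeval v
      rw [← hv0]
      apply hneg
      · intro i
        rcases hv i with h | h
        · by_cases hi : i = i₀
          · subst hi; right; rw [h]; simp [hl]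
          · left; rw [h]; simp [hl, hi]
        · right; exact h
      · rcases hv i₀ with h | h
        · rw [h]; simp [hl]
        · exact h
    · intro i
      by_cases hi : i = i₀
      · subst hi; simp [hl, hmem.2]
      · simp [hl, hi, hmem.1 i]
  -- derivative of the i₀-th coordinate
  have hφ : HasDerivAt (fun t => x t i₀) (f (x t₀) i₀) t₀ := hasDerivAt_pi.mp (hx t₀) i₀
  have hslope := hasDerivAt_iff_tendsto_slope.mp hφ
  have hev : ∀ᶠ t in nhdsWithin t₀ (Set.Ioi t₀), slope (fun t => x t i₀) t₀ t < 0 := by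
    have h1 : ∀ᶠ t in nhdsWithin t₀ {t₀}ᶜ, slope (fun t => x t i₀) t₀ t < 0 :=
      hslope.eventually (Filter.Tendsto.eventually_lt_const hd Filter.tendsto_id |>.mono fun y hy => hy)
    exact h1.filter_mono (nhdsWithin_mono t₀ (fun t ht => ne_of_gt ht))
  rw [Filter.eventually_iff, mem_nhdsGT_iff_exists_Ioc_subset] at hev
  obtain ⟨u, hu, hsub⟩ := hev
  refine ⟨u - t₀, by simpa using hu, fun t ht => ?_⟩
  have ht' : t ∈ Set.Ioc t₀ u := by
    constructor
    · exact ht.1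
    · linarith [ht.2]
  have := hsub ht'
  have hslope_lt : (x t i₀ - x t₀ i₀) / (t - t₀) < 0 := by
    simpa [slope_def_field, div_eq_iff] using this
  have htpos : 0 < t - t₀ := by linarith [ht'.1]
  have : x t i₀ - x t₀ i₀ < 0 := by
    by_contra hcon
    push_neg at hcon
    exact absurd hslope_lt (not_lt.mpr (div_nonneg hcon htpos.le))
  rw [hmem.2] at this
  linarith
end

section
/- Let f : (Fin n → ℝ) → (Fin n → ℝ) be a vector field each of whose components is multiaffine, let a, b : Fin n → ℝ satisfy aᵢ ≤ bᵢ for every i, fix an index i₀, and let F = {x ∈ [a,b] | x_{i₀} = b_{i₀}} be the upper face of the box in direction i₀. Let x : ℝ → (Fin n → ℝ) be a differentiable curve with x'(t) = f(x(t)) for all t, and suppose at some time t₀ the trajectory crosses F in the increasing-i₀ direction: x(t₀) ∈ F and there exists ε > 0 with x_{i₀}(t) > b_{i₀} for all t ∈ (t₀, t₀ + ε]. Then there exists a vertex v of [a,b] lying in F (v_{i₀} = b_{i₀}, vᵢ ∈ {aᵢ, bᵢ} for all i) such that f_{i₀}(v) ≥ 0. Consequently, every face crossing of a continuous trajectory is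 matched by a transition of the rectangular abstraction transition system, so the abstraction overapproximates the trajectories of the original system. -/
/-- A multiaffine function is affine in each coordinate. -/
lemma MultiAffine.affine_update {n : ℕ} {f : (Fin n → ℝ) → ℝ} (hf : MultiAffine f)
    (y : Fin n → ℝ) (i : Fin n) :
    ∃ A B : ℝ, ∀ s, f (Function.update y i s) = A + B * s := by
  classical
  obtain ⟨p, hdeg, hev⟩ := hf
  refine ⟨∑ m ∈ p.support.filter (fun m => m i = 0),
            p.coeff m * ∏ j ∈ Finset.univ.erase i, y j ^ m j,
          ∑ m ∈ p.support.filter (fun m => ¬ m i = 0),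
            p.coeff m * ∏ j ∈ Finset.univ.erase i, y j ^ m j, ?_⟩
  intro s
  rw [hev, MvPolynomial.eval_eq',
    ← Finset.sum_filter_add_sum_filter_not p.support (fun m => m i = 0)]
  have hprod : ∀ m : Fin n →₀ ℕ,
      (∏ j ∈ Finset.univ.erase i, Function.update y i s j ^ m j)
        = ∏ j ∈ Finset.univ.erase i, y j ^ m j := by
    intro m
    refine Finset.prod_congr rfl fun j hj => ?_
    rw [Function.update_of_ne (Finset.ne_of_mem_erase hj)]
  congr 1
  · refine Finset.sum_congr rfl fun m hm => ?_
    simp only [Finset.mem_filter] at hm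
    rw [← Finset.mul_prod_erase Finset.univ _ (Finset.mem_univ i),
      Function.update_self, hm.2, pow_zero, one_mul, hprod]
  · rw [Finset.sum_mul]
    refine Finset.sum_congr rfl fun m hm => ?_
    simp only [Finset.mem_filter] at hm
    have h1 : m i = 1 := by
      have := (MvPolynomial.degreeOf_lt_iff (by norm_num : (0:ℕ) < 2)).mp
        (lt_of_le_of_lt (hdeg i) one_lt_two) m hm.1
      omega
    rw [← Finset.mul_prod_erase Finset.univ _ (Finset.mem_univ i),
      Function.update_self, h1, pow_one, hprod]
    ring

/-- A multiaffine function on a box is dominated at some vertex, and we can keep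
a coordinate that is already at its upper bound. -/
lemma MultiAffine.exists_vertex_ge {n : ℕ} {f : (Fin n → ℝ) → ℝ} (hf : MultiAffine f)
    (a b : Fin n → ℝ) (i₀ : Fin n) :
    ∀ k (y : Fin n → ℝ), (∀ i, a i ≤ y i ∧ y i ≤ b i) → y i₀ = b i₀ →
      (Finset.univ.filter (fun i => y i ≠ a i ∧ y i ≠ b i)).card = k →
      ∃ v : Fin n → ℝ, (∀ i, v i = a i ∨ v i = b i) ∧ v i₀ = b i₀ ∧ f y ≤ f v := by
  classical
  intro k
  induction k with
  | zero =>
    intro y hy hy0 hc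
    refine ⟨y, ?_, hy0, le_refl _⟩
    intro i
    by_contra h
    push_neg at h
    have hmem : i ∈ Finset.univ.filter (fun i => y i ≠ a i ∧ y i ≠ b i) := by
      simp [h.1, h.2]
    rw [Finset.card_eq_zero] at hc
    simp [hc] at hmem
  | succ k ih =>
    intro y hy hy0 hc
    have hne : (Finset.univ.filter (fun i => y i ≠ a i ∧ y i ≠ b i)).Nonempty :=
      Finset.card_pos.mp (by omega)
    obtain ⟨i, hi⟩ := hne
    have hi' := hi
    simp only [Finset.mem_filter, Finset.mem_univ, true_and] at hi'
    have hii0 : i₀ ≠ i := by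
      intro h
      exact hi'.2 (by rw [← h, hy0])
    obtain ⟨A, B, hAB⟩ := hf.affine_update y i
    set s : ℝ := if 0 ≤ B then b i else a i with hs
    set y' := Function.update y i s with hy'
    have hsab : a i ≤ s ∧ s ≤ b i := by
      have hab' : a i ≤ b i := (hy i).1.trans (hy i).2
      rcases le_or_gt 0 B with h | h
      · constructor <;> simp [hs, h, hab']
      · constructor <;> simp [hs, not_le.mpr h, hab']
    have hfy : f y ≤ f y' := by
      have h0 : f y = A + B * y i := by
        have := hAB (y i)
        rwa [Function.update_eq_self] at this
      have h1 : f y' = A + B * s := hAB s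
      rw [h0, h1]
      rcases le_or_gt 0 B with h | h
      · have : s = b i := by simp [hs, h]
        nlinarith [(hy i).2]
      · have : s = a i := by simp [hs, not_le.mpr h]
        nlinarith [(hy i).1]
    have hbox' : ∀ j, a j ≤ y' j ∧ y' j ≤ b j := by
      intro j
      rcases eq_or_ne j i with rfl | hj
      · simpa [hy'] using hsab
      · simpa [hy', Function.update_of_ne hj] using hy j
    have hy0' : y' i₀ = b i₀ := by
      rw [hy', Function.update_of_ne hii0, hy0]
    have hcard : (Finset.univ.filter (fun j => y' j ≠ a j ∧ y' j ≠ b j)).card = k := by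
      have hset : Finset.univ.filter (fun j => y' j ≠ a j ∧ y' j ≠ b j)
          = (Finset.univ.filter (fun j => y j ≠ a j ∧ y j ≠ b j)).erase i := by
        ext j
        simp only [Finset.mem_filter, Finset.mem_erase, Finset.mem_univ, true_and]
        rcases eq_or_ne j i with rfl | hj
        · simp only [hy', Function.update_self]
          constructor
          · rintro ⟨h1, h2⟩
            rcases le_or_gt 0 B with h | h
            · exact absurd (by simp [hs, h]) h2
            · exact absurd (by simp [hs, not_le.mpr h]) h1
          · rintro ⟨h, -⟩; exact absurd rfl h
        · simp [hy', Function.update_of_ne hj, hj]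
      rw [hset, Finset.card_erase_of_mem hi, hc]
      omega
    obtain ⟨v, hv1, hv2, hv3⟩ := ih y' hbox' hy0' hcard
    exact ⟨v, hv1, hv2, hfy.trans hv3⟩

/-- Overapproximation of face crossings: if a trajectory of a multiaffine vector field
crosses the upper face of the box in direction `i₀` towards increasing `i₀`, then at
some vertex of that face the `i₀`-component of the field is nonnegative. -/
theorem exists_vertex_nonneg_of_crossing {n : ℕ}
    (f : (Fin n → ℝ) → (Fin n → ℝ)) (hf : ∀ j, MultiAffine (fun x => f x j))
    (a b : Fin n → ℝ) (hab : ∀ i, a i ≤ b i) (i₀ : Fin n)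
    (x : ℝ → (Fin n → ℝ)) (hx : ∀ t, HasDerivAt x (f (x t)) t)
    (t₀ : ℝ) (hmem : (∀ i, a i ≤ x t₀ i ∧ x t₀ i ≤ b i) ∧ x t₀ i₀ = b i₀)
    (hcross : ∃ ε > 0, ∀ t ∈ Set.Ioc t₀ (t₀ + ε), x t i₀ > b i₀) :
    ∃ v : Fin n → ℝ, (∀ i, v i = a i ∨ v i = b i) ∧ v i₀ = b i₀ ∧
      0 ≤ f v i₀ := by
  obtain ⟨hbox, hface⟩ := hmem
  obtain ⟨ε, hε, hcr⟩ := hcross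
  have hg : HasDerivAt (fun t => x t i₀) (f (x t₀) i₀) t₀ :=
    hasDerivAt_pi.mp (hx t₀) i₀
  -- derivative of the `i₀` component at the crossing time is nonnegative
  have hd0 : 0 ≤ f (x t₀) i₀ := by
    have htend : Filter.Tendsto (slope (fun t => x t i₀) t₀)
        (nhdsWithin t₀ (Set.Ioi t₀)) (nhds (f (x t₀) i₀)) :=
      (hasDerivAt_iff_tendsto_slope.mp hg).mono_left
        (nhdsWithin_mono _ (fun t ht => ne_of_gt ht))
    refine ge_of_tendsto htend ?_
    have hIoc : Set.Ioc t₀ (t₀ + ε) ∈ nhdsWithin t₀ (Set.Ioi t₀) :=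
      Ioc_mem_nhdsGT_of_mem ⟨le_refl _, by linarith⟩
    filter_upwards [hIoc] with t ht
    rw [slope_def_field]
    apply div_nonneg
    · have := hcr t ht
      rw [hface]
      linarith
    · linarith [ht.1]
  -- propagate to a vertex using multiaffinity
  obtain ⟨v, hv1, hv2, hv3⟩ := (hf i₀).exists_vertex_ge a b i₀
    (Finset.univ.filter (fun i => x t₀ i ≠ a i ∧ x t₀ i ≠ b i)).card
    (x t₀) hbox hface rfl
  exact ⟨v, hv1, hv2, le_trans hd0 hv3⟩
end

section
/- Let f : (Fin n → ℝ) → (Fin n → ℝ) be a vector field each of whose components is multiaffine, and let a, b : Fin n → ℝ satisfy aᵢ ≤ bᵢ for every i. If the box [a,b] contains an equilibrium point of f, i.e., there exists x* ∈ [a,b] with f(x*) = 0, then the zero vector lies in the convex hull of the finite set {f(v) | v a vertex of [a,b]}. -/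
open Finset

lemma monomial_interp {n : ℕ} (a b x t : Fin n → ℝ)
    (ht : ∀ i, t i * b i + (1 - t i) * a i = x i)
    (d : Fin n → ℕ) (hd : ∀ i, d i ≤ 1) :
    ∑ T ∈ Finset.univ.powerset,
      (((∏ i ∈ T, t i) * ∏ i ∈ Tᶜ, (1 - t i)) *
        ∏ i, (if i ∈ T then b i else a i) ^ d i)
      = ∏ i, x i ^ d i := by
  have key : ∀ T : Finset (Fin n),
      (((∏ i ∈ T, t i) * ∏ i ∈ Tᶜ, (1 - t i)) *
        ∏ i, (if i ∈ T then b i else a i) ^ d i)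
      = (∏ i ∈ T, t i * b i ^ d i) * ∏ i ∈ Finset.univ \ T, (1 - t i) * a i ^ d i := by
    intro T
    rw [← Finset.prod_mul_prod_compl T (fun i => (if i ∈ T then b i else a i) ^ d i),
      ← Finset.compl_eq_univ_sdiff]
    have h1 : (∏ i ∈ T, (if i ∈ T then b i else a i) ^ d i) = ∏ i ∈ T, b i ^ d i :=
      Finset.prod_congr rfl fun i hi => by rw [if_pos hi]
    have h2 : (∏ i ∈ Tᶜ, (if i ∈ T then b i else a i) ^ d i) = ∏ i ∈ Tᶜ, a i ^ d i :=
      Finset.prod_congr rfl fun i hi => by rw [if_neg (Finset.mem_compl.mp hi)]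
    rw [h1, h2, mul_mul_mul_comm, ← Finset.prod_mul_distrib, ← Finset.prod_mul_distrib]
  rw [Finset.sum_congr rfl fun T _ => key T, ← Finset.prod_add]
  apply Finset.prod_congr rfl
  intro i _
  have hdi := hd i
  interval_cases h : d i
  · simp
  · simpa using ht i

lemma eval_interp {n : ℕ} (a b x t : Fin n → ℝ)
    (ht : ∀ i, t i * b i + (1 - t i) * a i = x i)
    (p : MvPolynomial (Fin n) ℝ) (hp : ∀ i, p.degreeOf i ≤ 1) :
    MvPolynomial.eval x p =
      ∑ T ∈ Finset.univ.powerset,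
        ((∏ i ∈ T, t i) * ∏ i ∈ Tᶜ, (1 - t i)) *
          MvPolynomial.eval (fun i => if i ∈ T then b i else a i) p := by
  have hsupp : ∀ d ∈ p.support, ∀ i, d i ≤ 1 := by
    intro d hd i
    have h2 : p.degreeOf i < 2 := lt_of_le_of_lt (hp i) (by norm_num)
    exact Nat.lt_succ_iff.mp ((MvPolynomial.degreeOf_lt_iff (by norm_num)).mp h2 d hd)
  have expand : ∀ T : Finset (Fin n),
      ((∏ i ∈ T, t i) * ∏ i ∈ Tᶜ, (1 - t i)) *
          MvPolynomial.eval (fun i => if i ∈ T then b i else a i) p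
        = ∑ d ∈ p.support, MvPolynomial.coeff d p *
            (((∏ i ∈ T, t i) * ∏ i ∈ Tᶜ, (1 - t i)) *
              ∏ i, (if i ∈ T then b i else a i) ^ d i) := by
    intro T
    rw [MvPolynomial.eval_eq', Finset.mul_sum]
    exact Finset.sum_congr rfl fun d _ => by ring
  rw [Finset.sum_congr rfl fun T _ => expand T, Finset.sum_comm, MvPolynomial.eval_eq']
  apply Finset.sum_congr rfl
  intro d hd
  rw [← Finset.mul_sum, monomial_interp a b x t ht (fun i => d i) (hsupp d hd)]


/-- Necessary vertex condition for equilibria: if a box contains an equilibrium point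
of a multiaffine vector field, then `0` lies in the convex hull of the values of the
field at the box's vertices. -/
theorem zero_mem_convexHull_of_equilibrium {n : ℕ}
    (f : (Fin n → ℝ) → (Fin n → ℝ)) (hf : ∀ j, MultiAffine (fun x => f x j))
    (a b : Fin n → ℝ) (hab : ∀ i, a i ≤ b i)
    (heq : ∃ x : Fin n → ℝ, (∀ i, a i ≤ x i ∧ x i ≤ b i) ∧ f x = 0) :
    (0 : Fin n → ℝ) ∈
      convexHull ℝ (f '' {v : Fin n → ℝ | ∀ i, v i = a i ∨ v i = b i}) := by
  obtain ⟨x, hx, hfx⟩ := heq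
  set t : Fin n → ℝ := fun i => if a i = b i then 0 else (x i - a i) / (b i - a i) with htdef
  have ht01 : ∀ i, 0 ≤ t i ∧ t i ≤ 1 := by
    intro i
    simp only [htdef]
    split_ifs with h
    · norm_num
    · have hlt : a i < b i := lt_of_le_of_ne (hab i) h
      constructor
      · exact div_nonneg (by linarith [(hx i).1]) (by linarith)
      · rw [div_le_one (by linarith)]; linarith [(hx i).2]
  have ht : ∀ i, t i * b i + (1 - t i) * a i = x i := by
    intro i
    simp only [htdef]
    split_ifs with h
    · have h1 := (hx i).1
      have h2 := (hx i).2
      rw [← h] at h2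
      linarith
    · have hlt : a i < b i := lt_of_le_of_ne (hab i) h
      have h3 : (x i - a i) / (b i - a i) * (b i - a i) = x i - a i :=
        div_mul_cancel₀ _ (sub_ne_zero.mpr (ne_of_gt hlt))
      linear_combination h3
  set w : Finset (Fin n) → ℝ := fun T => (∏ i ∈ T, t i) * ∏ i ∈ Tᶜ, (1 - t i) with hwdef
  set v : Finset (Fin n) → (Fin n → ℝ) := fun T i => if i ∈ T then b i else a i with hvdef
  have hw0 : ∀ T, 0 ≤ w T := fun T =>
    mul_nonneg (Finset.prod_nonneg fun i _ => (ht01 i).1)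
      (Finset.prod_nonneg fun i _ => by linarith [(ht01 i).2])
  have hw1 : ∑ T ∈ Finset.univ.powerset, w T = 1 := by
    have := monomial_interp a b x t ht (fun _ => 0) (fun _ => by norm_num)
    simpa using this
  have hsum : ∑ T ∈ Finset.univ.powerset, w T • f (v T) = 0 := by
    rw [← hfx]
    funext j
    obtain ⟨p, hp, hpf⟩ := hf j
    rw [Finset.sum_apply]
    simp only [Pi.smul_apply, smul_eq_mul]
    have : ∀ T, f (v T) j = MvPolynomial.eval (v T) p := fun T => hpf (v T)
    rw [Finset.sum_congr rfl fun T _ => by rw [this T]]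
    rw [show f x j = MvPolynomial.eval x p from hpf x, eval_interp a b x t ht p hp]
  rw [← hsum]
  apply (convex_convexHull ℝ _).sum_mem (fun T _ => hw0 T) hw1
  intro T _
  apply subset_convexHull
  exact ⟨v T, fun i => by by_cases h : i ∈ T <;> simp [hvdef, h], rfl⟩
end

section
/- Let f : (Fin n → ℝ) →ᵃ (Fin n → ℝ) be an affine map and let a, b : Fin n → ℝ satisfy aᵢ ≤ bᵢ for every i. Then the box [a,b] contains an equilibrium point of f (a point x* ∈ [a,b] with f(x*) = 0) if and only if the zero vector lies in the convex hull of the finite set {f(v) | v a vertex of [a,b]}. -/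
/-- Vertex characterisation of non-transient rectangles for affine systems: a box
contains an equilibrium of an affine vector field iff `0` lies in the convex hull of
the values of the field at the box's vertices. -/
theorem affine_equilibrium_iff_zero_mem_convexHull {n : ℕ}
    (f : (Fin n → ℝ) →ᵃ[ℝ] (Fin n → ℝ)) (a b : Fin n → ℝ)
    (hab : ∀ i, a i ≤ b i) :
    (∃ x : Fin n → ℝ, (∀ i, a i ≤ x i ∧ x i ≤ b i) ∧ f x = 0) ↔
      (0 : Fin n → ℝ) ∈
        convexHull ℝ (f '' {v : Fin n → ℝ | ∀ i, v i = a i ∨ v i = b i}) := by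
  have hV : {v : Fin n → ℝ | ∀ i, v i = a i ∨ v i = b i}
      = Set.pi Set.univ (fun i => ({a i, b i} : Set ℝ)) := by
    ext v; simp [Set.mem_pi]
  have hbox : {x : Fin n → ℝ | ∀ i, a i ≤ x i ∧ x i ≤ b i}
      = convexHull ℝ {v : Fin n → ℝ | ∀ i, v i = a i ∨ v i = b i} := by
    rw [hV, convexHull_pi]
    ext x
    simp only [Set.mem_pi, Set.mem_univ, forall_true_left, Set.mem_setOf_eq]
    refine forall_congr' fun i => ?_
    rw [convexHull_pair, segment_eq_Icc (hab i)]
    simp [Set.mem_Icc]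
  rw [← AffineMap.image_convexHull, ← hbox]
  constructor
  · rintro ⟨x, hx, hfx⟩
    exact ⟨x, hx, hfx⟩
  · rintro ⟨x, hx, hfx⟩
    exact ⟨x, hx, hfx⟩
end
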